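/- arXiv:2404.08631 — 7 statements merged into one kernel-verified Lean document; each statement's English description precedes it below -/
import Mathlib

section
/- Let d_1 ≤ d_2 ≤ ... ≤ d_K be real numbers and let K' be a natural number with 2K' < K. For any T ≤ K', among all sequences e_1 ≤ e_2 ≤ ... ≤ e_K obtained by changing at most T of the values d_i (and re-sorting), the maximum possible value of the trimmed mean (∑_{i=K'+1}^{K-K'} e_i)/(K-2K') equals (∑_{i=K'+1+T}^{K-K'+T} d_i)/(K-2K'). -/
/-!
If the `i`-th smallest changed value exceeded `x = d_{i+T}`, then at least `K - i + 1` changed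
values would exceed `x`, whereas at most `K - i - T` of the original values do; so more than `T`
values would have been changed. Hence `e_i ≤ d_{i+T}` termwise, and the bound is attained by
replacing `d_1, …, d_T` with copies of `d_K`, which shifts the sorted sequence by `T`.
-/

open Finset

noncomputable def tm (K Kp : ℕ) (e : ℕ → ℝ) : ℝ :=
  (∑ i ∈ Finset.Icc (Kp + 1) (K - Kp), e i) / ((K : ℝ) - 2 * Kp)

noncomputable def sortedOf (E : Multiset ℝ) : ℕ → ℝ :=
  fun i => (E.sort (· ≤ ·)).getD (i - 1) 0

def msOf (K : ℕ) (d : ℕ → ℝ) : Multiset ℝ := (Finset.Icc 1 K).val.map d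

noncomputable def Ub (K Kp : ℕ) (d : ℕ → ℝ) (t : ℕ) : ℝ :=
  (∑ i ∈ Finset.Icc (Kp + 1 + t) (K - Kp + t), d i) / ((K : ℝ) - 2 * Kp)

noncomputable def Lb (K Kp : ℕ) (d : ℕ → ℝ) (t : ℕ) : ℝ :=
  (∑ i ∈ Finset.Icc (Kp + 1 - t) (K - Kp - t), d i) / ((K : ℝ) - 2 * Kp)

namespace List

variable {α : Type*} [LinearOrder α] {l : List α}

theorem SortedLE.length_sub_le_countP_lt {i : ℕ} (hl : l.SortedLE) (hi : i < l.length) {x : α}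
    (hx : x < l[i]) : l.length - i ≤ l.countP (fun a => x < a) := by
  have hdrop : (l.drop i).countP (fun a => x < a) = (l.drop i).length := by
    refine countP_eq_length.mpr fun a ha => ?_
    obtain ⟨n, hn, rfl⟩ := mem_iff_getElem.mp ha
    rw [getElem_drop]
    simpa using hx.trans_le (hl.getElem_le_getElem_of_le (Nat.le_add_right i n))
  simpa [hdrop] using (drop_sublist i l).countP_le (p := fun a => x < a)

theorem SortedLE.countP_lt_le {j : ℕ} (hl : l.SortedLE) (hj : j < l.length) {x : α}
    (hx : l[j] ≤ x) : l.countP (fun a => x < a) ≤ l.length - (j + 1) := by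
  have htake : (l.take (j + 1)).countP (fun a => x < a) = 0 := by
    refine countP_eq_zero.mpr fun a ha => ?_
    obtain ⟨n, hn, rfl⟩ := mem_iff_getElem.mp ha
    rw [getElem_take]
    simpa using (hl.getElem_le_getElem_of_le (by simp at hn; omega)).trans hx
  conv_lhs => rw [← take_append_drop (j + 1) l]
  rw [countP_append, htake, zero_add]
  simpa using countP_le_length (l := l.drop (j + 1))

end List

namespace Multiset

variable {α : Type*} [DecidableEq α] {s t : Multiset α}

theorem card_sub_le_card_sub_of_card_le (h : card s ≤ card t) : card (s - t) ≤ card (t - s) := by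
  have hs := congrArg card (sub_add_inter s t)
  have ht := congrArg card (sub_add_inter t s)
  rw [card_add] at hs ht
  rw [inter_comm] at ht
  omega

theorem countP_le_card_sub_add_countP (p : α → Prop) [DecidablePred p] :
    countP p s ≤ card (s - t) + countP p t :=
  calc countP p s ≤ countP p (s - t + t) := countP_le_of_le p Multiset.le_sub_add
    _ ≤ card (s - t) + countP p t := by rw [countP_add]; gcongr; exact countP_le_card p _

end Multiset

namespace Multiset

variable {α : Type*} [LinearOrder α] {s t : Multiset α}

theorem sort_getElem_le_sort_getElem_add {T i : ℕ} (hcard : card t = card s)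
    (hst : card (s - t) ≤ T) (hi : i < (t.sort (· ≤ ·)).length)
    (hiT : i + T < (s.sort (· ≤ ·)).length) :
    (t.sort (· ≤ ·))[i] ≤ (s.sort (· ≤ ·))[i + T] := by
  by_contra! hlt
  have hlen_t := length_sort (s := t) (· ≤ ·)
  have hlen_s := length_sort (s := s) (· ≤ ·)
  have hmany := (pairwise_sort t (· ≤ ·)).sortedLE.length_sub_le_countP_lt hi hlt
  have hfew := (pairwise_sort s (· ≤ ·)).sortedLE.countP_lt_le hiT le_rfl
  have hchanged := countP_le_card_sub_add_countP (s := t) (t := s)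
    (LT.lt (s.sort (· ≤ ·))[i + T])
  have hts := card_sub_le_card_sub_of_card_le hcard.le
  rw [← coe_countP, sort_eq] at hmany hfew
  omega

end Multiset

theorem sortedOf_le_sortedOf_add {E s : Multiset ℝ} {T i : ℕ}
    (hcard : Multiset.card E = Multiset.card s) (hst : Multiset.card (s - E) ≤ T) (hi : 1 ≤ i)
    (hiT : i + T ≤ Multiset.card s) :
    sortedOf E i ≤ sortedOf s (i + T) := by
  have hlen_E := Multiset.length_sort (s := E) (· ≤ ·)
  have hlen_s := Multiset.length_sort (s := s) (· ≤ ·)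
  simp only [sortedOf]
  rw [List.getD_eq_getElem _ _ (by omega), List.getD_eq_getElem _ _ (by omega)]
  simpa only [show i - 1 + T = i + T - 1 by omega] using
    Multiset.sort_getElem_le_sort_getElem_add hcard hst (i := i - 1) (by omega) (by omega)

theorem sort_msOf {K : ℕ} {f : ℕ → ℝ} (hf : ∀ i j, 1 ≤ i → i ≤ j → j ≤ K → f i ≤ f j) :
    (msOf K f).sort (· ≤ ·) = (List.range' 1 K).map f := by
  have hmsOf : msOf K f = ((List.range' 1 K).map f : List ℝ) := by
    simp [msOf, Nat.Icc_eq_range']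
  rw [hmsOf, Multiset.coe_sort]
  refine List.mergeSort_eq_self _ ?_
  simp only [List.pairwise_iff_getElem, List.length_map, List.length_range', List.getElem_map,
    List.getElem_range']
  intro i j hi hj hij
  exact hf _ _ (by omega) (by omega) (by omega)

theorem sortedOf_msOf {K i : ℕ} {f : ℕ → ℝ} (hf : ∀ i j, 1 ≤ i → i ≤ j → j ≤ K → f i ≤ f j)
    (h1 : 1 ≤ i) (hK : i ≤ K) : sortedOf (msOf K f) i = f i := by
  rw [sortedOf, sort_msOf hf, List.getD_eq_getElem _ _ (by simp; omega)]
  simp only [List.getElem_map, List.getElem_range']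
  congr 1
  omega

theorem card_msOf (K : ℕ) (f : ℕ → ℝ) : Multiset.card (msOf K f) = K := by
  simp [msOf]

theorem card_msOf_sub_msOf_shift_le (K T : ℕ) (d : ℕ → ℝ) :
    Multiset.card (msOf K d - msOf K fun i => d (min (i + T) K)) ≤ T := by
  set kept := (Icc (T + 1) K).val.map d
  have hkept_shift : kept ≤ msOf K fun i => d (min (i + T) K) := by
    rw [msOf, show (fun i => d (min (i + T) K)) = d ∘ fun i => min (i + T) K from rfl,
      ← Multiset.map_map]
    refine Multiset.map_le_map ((Multiset.le_iff_subset (Icc (T + 1) K).nodup).mpr ?_)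
    intro j hj
    rw [Finset.mem_val, Finset.mem_Icc] at hj
    exact Multiset.mem_map.mpr ⟨j - T, by simp; omega, by omega⟩
  have hkept : kept ≤ msOf K d :=
    Multiset.map_le_map (Finset.val_le_iff.mpr (Finset.Icc_subset_Icc (by omega) le_rfl))
  calc Multiset.card (msOf K d - msOf K fun i => d (min (i + T) K))
      ≤ Multiset.card (msOf K d - kept) := Multiset.card_le_card (tsub_le_tsub_left hkept_shift _)
    _ = K - (K - T) := by simp [Multiset.card_sub hkept, card_msOf, kept]
    _ ≤ T := by omega

theorem tm_shift (K Kp T : ℕ) (d : ℕ → ℝ) : tm K Kp (fun i => d (i + T)) = Ub K Kp d T := by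
  rw [tm, Ub, ← Finset.map_add_right_Icc, Finset.sum_map]
  rfl

theorem tm_congr {K Kp : ℕ} {e e' : ℕ → ℝ} (h : ∀ i ∈ Icc (Kp + 1) (K - Kp), e i = e' i) :
    tm K Kp e = tm K Kp e' := by
  rw [tm, tm, Finset.sum_congr rfl h]

theorem tm_le_tm {K Kp : ℕ} {e e' : ℕ → ℝ} (hK : 2 * Kp ≤ K)
    (h : ∀ i ∈ Icc (Kp + 1) (K - Kp), e i ≤ e' i) : tm K Kp e ≤ tm K Kp e' := by
  have hpos : (0 : ℝ) ≤ K - 2 * Kp := by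
    rw [sub_nonneg]; exact_mod_cast hK
  exact div_le_div_of_nonneg_right (Finset.sum_le_sum h) hpos

theorem stmt0 (K Kp T : ℕ) (hK : 2 * Kp < K) (hT : T ≤ Kp) (d : ℕ → ℝ)
    (hmono : ∀ i j, 1 ≤ i → i ≤ j → j ≤ K → d i ≤ d j) :
    IsGreatest
      {r : ℝ | ∃ E : Multiset ℝ, Multiset.card E = K ∧
        Multiset.card (msOf K d - E) ≤ T ∧ r = tm K Kp (sortedOf E)}
      ((∑ i ∈ Finset.Icc (Kp + 1 + T) (K - Kp + T), d i) / ((K : ℝ) - 2 * Kp)) := by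
  change IsGreatest _ (Ub K Kp d T)
  have hrange : ∀ i ∈ Icc (Kp + 1) (K - Kp), 1 ≤ i ∧ i + T ≤ K := by
    intro i hi
    rw [Finset.mem_Icc] at hi
    omega
  refine ⟨⟨msOf K fun i => d (min (i + T) K), card_msOf _ _,
    card_msOf_sub_msOf_shift_le K T d, ?_⟩, ?_⟩
  · rw [← tm_shift]
    refine tm_congr fun i hi => ?_
    obtain ⟨h1, h2⟩ := hrange i hi
    rw [sortedOf_msOf (fun i j _ _ _ => hmono _ _ (by omega) (by omega) (by omega)) h1 (by omega),
      min_eq_left h2]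
  · rintro r ⟨E, hcard, hdiff, rfl⟩
    rw [← tm_shift]
    refine tm_le_tm hK.le fun i hi => ?_
    obtain ⟨h1, h2⟩ := hrange i hi
    rw [← sortedOf_msOf hmono (by omega) h2]
    exact sortedOf_le_sortedOf_add (by rw [hcard, card_msOf]) hdiff h1 (by rwa [card_msOf])
end

section
/- (Tightness of upper bound) Let d_1 ≤ ... ≤ d_K be reals, K' with 2K' < K, and T ≤ K'. Consider the multiset E obtained from {d_1,...,d_K} by replacing d_1,...,d_T each with d_K. Then E differs from the original multiset in at most T elements, and the K'-trimmed mean of the sorted sequence of E equals (∑_{i=K'+1+T}^{K-K'+T} d_i)/(K-2K'). -/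
/-!
Since `d` is nondecreasing, the list `d (T+1), …, d K, d K, …, d K` is already sorted, so the
`i`-th smallest element of `E` is `d (i + T)` for `i ≤ K - T`. As `T ≤ K'`, the whole trimmed
window `K' + 1, …, K - K'` lies in that range, and the trimmed mean is the window shifted by `T`.
`E` still contains `d (T+1), …, d K`, so it differs from the original multiset in at most the
`T` removed values.
-/

open Finset

theorem sortedOf_coe_of_pairwise {l : List ℝ} (hl : l.Pairwise (· ≤ ·)) (i : ℕ) :
    sortedOf l i = l.getD (i - 1) 0 := by
  rw [sortedOf, Multiset.coe_sort, List.mergeSort_eq_self _ hl]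

theorem msOf_le_map_Icc_add_map_Icc (K T : ℕ) (d : ℕ → ℝ) :
    msOf K d ≤ (Icc 1 T).val.map d + (Icc (T + 1) K).val.map d := by
  have hdisj : Disjoint (Icc 1 T) (Icc (T + 1) K) :=
    disjoint_left.mpr fun x hx hy => by simp only [mem_Icc] at hx hy; omega
  rw [← Multiset.map_add, ← disjUnion_val _ _ hdisj, msOf]
  refine Multiset.map_le_map (val_le_iff.mpr fun x hx => ?_)
  simp only [mem_disjUnion, mem_Icc] at hx ⊢
  omega

theorem card_msOf_sub_le (K T : ℕ) (d : ℕ → ℝ) (A : Multiset ℝ) :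
    Multiset.card (msOf K d - (A + (Icc (T + 1) K).val.map d)) ≤ T := by
  have hsub : msOf K d - (A + (Icc (T + 1) K).val.map d) ≤ (Icc 1 T).val.map d :=
    (tsub_le_tsub_left (Multiset.le_add_left _ _) _).trans
      (Multiset.sub_le_iff_le_add.mpr (msOf_le_map_Icc_add_map_Icc K T d))
  simpa using Multiset.card_le_card hsub

theorem replicate_add_map_Icc_eq_coe (K T : ℕ) (d : ℕ → ℝ) :
    Multiset.replicate T (d K) + (Icc (T + 1) K).val.map d =
      ↑((List.range' (T + 1) (K - T)).map d ++ List.replicate T (d K)) := by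
  rw [Nat.Icc_eq_range', show K + 1 - (T + 1) = K - T by omega, ← Multiset.coe_add,
    ← Multiset.map_coe, ← Multiset.coe_replicate, add_comm]

section Monotone

variable {K T : ℕ} {d : ℕ → ℝ}

theorem pairwise_map_range'_append_replicate
    (hmono : ∀ i j, 1 ≤ i → i ≤ j → j ≤ K → d i ≤ d j) :
    ((List.range' (T + 1) (K - T)).map d ++ List.replicate T (d K)).Pairwise (· ≤ ·) := by
  have hmem : ∀ x ∈ List.range' (T + 1) (K - T), T + 1 ≤ x ∧ x ≤ K := fun x hx => by
    rw [List.mem_range'_1] at hx; omega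
  refine List.pairwise_append.mpr ⟨?_, List.pairwise_replicate.mpr (Or.inr le_rfl), ?_⟩
  · rw [List.pairwise_map]
    refine List.Pairwise.imp_of_mem (fun {x y} hx hy hxy => ?_) List.pairwise_lt_range'
    exact hmono x y (by linarith [hmem x hx]) hxy.le (hmem y hy).2
  · simp only [List.mem_map, List.mem_replicate]
    rintro _ ⟨x, hx, rfl⟩ _ ⟨-, rfl⟩
    exact hmono x K (by linarith [hmem x hx]) (hmem x hx).2 le_rfl

theorem sortedOf_replicate_add_map_Icc
    (hmono : ∀ i j, 1 ≤ i → i ≤ j → j ≤ K → d i ≤ d j) {i : ℕ} (hi₁ : 1 ≤ i) (hi₂ : i ≤ K - T) :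
    sortedOf (Multiset.replicate T (d K) + (Icc (T + 1) K).val.map d) i = d (i + T) := by
  have hlt : i - 1 < ((List.range' (T + 1) (K - T)).map d).length := by
    simp only [List.length_map, List.length_range']; omega
  rw [replicate_add_map_Icc_eq_coe, sortedOf_coe_of_pairwise
    (pairwise_map_range'_append_replicate hmono), List.getD_append _ _ _ _ hlt,
    List.getD_eq_getElem _ _ hlt, List.getElem_map, List.getElem_range'_1]
  congr 1
  omega

end Monotone

theorem tm_eq_Ub_of_shift (K Kp t : ℕ) (e d : ℕ → ℝ)
    (he : ∀ i ∈ Icc (Kp + 1) (K - Kp), e i = d (i + t)) :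
    tm K Kp e = Ub K Kp d t := by
  rw [tm, Ub, ← map_add_right_Icc, sum_map, sum_congr rfl he]
  rfl

theorem stmt5_general (K Kp T : ℕ) (hT : T ≤ Kp) (d : ℕ → ℝ)
    (hmono : ∀ i j, 1 ≤ i → i ≤ j → j ≤ K → d i ≤ d j) :
    Multiset.card
      (msOf K d - (Multiset.replicate T (d K) + (Finset.Icc (T + 1) K).val.map d)) ≤ T ∧
    tm K Kp (sortedOf (Multiset.replicate T (d K) + (Finset.Icc (T + 1) K).val.map d)) =
      (∑ i ∈ Finset.Icc (Kp + 1 + T) (K - Kp + T), d i) / ((K : ℝ) - 2 * Kp) := by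
  refine ⟨card_msOf_sub_le K T d _, tm_eq_Ub_of_shift K Kp T _ d fun i hi => ?_⟩
  rw [mem_Icc] at hi
  exact sortedOf_replicate_add_map_Icc hmono (by omega) (by omega)

theorem stmt5 (K Kp T : ℕ) (hK : 2 * Kp < K) (hT : T ≤ Kp) (d : ℕ → ℝ)
    (hmono : ∀ i j, 1 ≤ i → i ≤ j → j ≤ K → d i ≤ d j) :
    Multiset.card
      (msOf K d - (Multiset.replicate T (d K) + (Finset.Icc (T + 1) K).val.map d)) ≤ T ∧
    tm K Kp (sortedOf (Multiset.replicate T (d K) + (Finset.Icc (T + 1) K).val.map d)) =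
      (∑ i ∈ Finset.Icc (Kp + 1 + T) (K - Kp + T), d i) / ((K : ℝ) - 2 * Kp) :=
  stmt5_general K Kp T hT d hmono
end

section
/- (Tightness of lower bound) Let d_1 ≤ ... ≤ d_K be reals, K' with 2K' < K, and T ≤ K'. Consider the multiset E obtained from {d_1,...,d_K} by replacing d_{K-T+1},...,d_K each with d_1. Then E differs from the original multiset in at most T elements, and the K'-trimmed mean of the sorted sequence of E equals (∑_{i=K'+1-T}^{K-K'-T} d_i)/(K-2K'). -/
open Finset

/-!
Listed as `T` copies of `d 1` followed by `d 1, …, d (K - T)`, the new multiset is already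
sorted, so for `i > T` its `i`-th smallest element is `d (i - T)`. Since `T ≤ Kp`, the trimming
window `Kp + 1, …, K - Kp` lies entirely beyond the `T` padding copies, and the trimmed sum is the
sum of `d` over the window shifted down by `T`. The multiset difference with the original
consists of `d (K - T + 1), …, d K`, hence has at most `T` elements.
-/

def replaceTop (K T : ℕ) (d : ℕ → ℝ) : Multiset ℝ :=
  Multiset.replicate T (d 1) + (Icc 1 (K - T)).val.map d

theorem sortedOf_coe {L : List ℝ} (hL : L.Pairwise (· ≤ ·)) (i : ℕ) :
    sortedOf L i = L.getD (i - 1) 0 := by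
  rw [sortedOf, Multiset.coe_sort, List.mergeSort_of_pairwise (by simpa using hL)]

theorem Icc_one_val_map {α : Type*} (d : ℕ → α) (n : ℕ) :
    (Icc 1 n).val.map d = ((List.range' 1 n).map d : Multiset α) := by
  rw [Nat.Icc_eq_range']
  simp

theorem pairwise_le_map_range' {α : Type*} [Preorder α] {d : ℕ → α} {n : ℕ}
    (hd : MonotoneOn d (Set.Icc 1 n)) : ((List.range' 1 n).map d).Pairwise (· ≤ ·) := by
  refine List.pairwise_map.mpr ((List.pairwise_lt_range' (s := 1) (n := n)).imp_of_mem ?_)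
  intro a b ha hb hab
  rw [List.mem_range'_1] at ha hb
  exact hd ⟨ha.1, by omega⟩ ⟨hb.1, by omega⟩ hab.le

theorem pairwise_le_replicate_append_map_range' {α : Type*} [Preorder α] {d : ℕ → α} {n : ℕ}
    (hd : MonotoneOn d (Set.Icc 1 n)) (T : ℕ) :
    (List.replicate T (d 1) ++ (List.range' 1 n).map d).Pairwise (· ≤ ·) := by
  refine List.pairwise_append.mpr
    ⟨List.pairwise_replicate.mpr (Or.inr le_rfl), pairwise_le_map_range' hd, ?_⟩
  intro a ha b hb
  obtain ⟨j, hj, rfl⟩ := List.mem_map.mp hb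
  rw [List.mem_range'_1] at hj
  rw [List.eq_of_mem_replicate ha]
  exact hd ⟨le_rfl, by omega⟩ ⟨hj.1, by omega⟩ hj.1

theorem replaceTop_eq_coe (K T : ℕ) (d : ℕ → ℝ) :
    replaceTop K T d = ↑(List.replicate T (d 1) ++ (List.range' 1 (K - T)).map d) := by
  rw [replaceTop, Icc_one_val_map]
  rfl

theorem sortedOf_replaceTop {K T i : ℕ} {d : ℕ → ℝ} (hd : MonotoneOn d (Set.Icc 1 K))
    (hTi : T < i) (hiK : i ≤ K) : sortedOf (replaceTop K T d) i = d (i - T) := by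
  have hsorted := pairwise_le_replicate_append_map_range'
    (hd.mono (Set.Icc_subset_Icc_right (Nat.sub_le K T))) T
  rw [replaceTop_eq_coe, sortedOf_coe hsorted,
    List.getD_append_right _ _ _ _ (by simp; omega), List.length_replicate,
    List.getD_eq_getElem _ _ (by simp; omega), List.getElem_map, List.getElem_range']
  congr 1
  omega

theorem card_msOf_sub_replaceTop_le (K T : ℕ) (d : ℕ → ℝ) :
    Multiset.card (msOf K d - replaceTop K T d) ≤ T := by
  have hle : (Icc 1 (K - T)).val.map d ≤ msOf K d :=
    Multiset.map_le_map (Finset.val_le_iff.mpr (Icc_subset_Icc_right (Nat.sub_le K T)))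
  calc Multiset.card (msOf K d - replaceTop K T d)
      ≤ Multiset.card (msOf K d - (Icc 1 (K - T)).val.map d) :=
        Multiset.card_le_card (tsub_le_tsub_left (Multiset.le_add_left _ _) _)
    _ ≤ T := by
        rw [Multiset.card_sub hle]
        simp only [msOf, Multiset.card_map, card_val, Nat.card_Icc]
        omega

theorem sum_Icc_comp_sub {M : Type*} [AddCommMonoid M] (f : ℕ → M) {a b T : ℕ} (hT : T < a) :
    ∑ i ∈ Icc a b, f (i - T) = ∑ j ∈ Icc (a - T) (b - T), f j := by
  apply Finset.sum_nbij' (· - T) (· + T) <;> intro i hi <;> simp only [mem_Icc] at * <;> omega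

theorem tm_sortedOf_replaceTop {K Kp T : ℕ} {d : ℕ → ℝ} (hd : MonotoneOn d (Set.Icc 1 K))
    (hT : T ≤ Kp) : tm K Kp (sortedOf (replaceTop K T d)) = Lb K Kp d T := by
  have hwindow : ∀ i ∈ Icc (Kp + 1) (K - Kp), sortedOf (replaceTop K T d) i = d (i - T) :=
    fun i hi => have hi := mem_Icc.mp hi; sortedOf_replaceTop hd (by omega) (by omega)
  rw [tm, Lb, sum_congr rfl hwindow, sum_Icc_comp_sub d (by omega)]

theorem stmt6_general (K Kp T : ℕ) (hT : T ≤ Kp) (d : ℕ → ℝ)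
    (hmono : ∀ i j, 1 ≤ i → i ≤ j → j ≤ K → d i ≤ d j) :
    Multiset.card
      (msOf K d - (Multiset.replicate T (d 1) + (Finset.Icc 1 (K - T)).val.map d)) ≤ T ∧
    tm K Kp (sortedOf (Multiset.replicate T (d 1) + (Finset.Icc 1 (K - T)).val.map d)) =
      (∑ i ∈ Finset.Icc (Kp + 1 - T) (K - Kp - T), d i) / ((K : ℝ) - 2 * Kp) := by
  have hd : MonotoneOn d (Set.Icc 1 K) := fun i hi j hj hij => hmono i j hi.1 hij hj.2
  exact ⟨card_msOf_sub_replaceTop_le K T d, tm_sortedOf_replaceTop hd hT⟩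

theorem stmt6 (K Kp T : ℕ) (hK : 2 * Kp < K) (hT : T ≤ Kp) (d : ℕ → ℝ)
    (hmono : ∀ i j, 1 ≤ i → i ≤ j → j ≤ K → d i ≤ d j) :
    Multiset.card
      (msOf K d - (Multiset.replicate T (d 1) + (Finset.Icc 1 (K - T)).val.map d)) ≤ T ∧
    tm K Kp (sortedOf (Multiset.replicate T (d 1) + (Finset.Icc 1 (K - T)).val.map d)) =
      (∑ i ∈ Finset.Icc (Kp + 1 - T) (K - Kp - T), d i) / ((K : ℝ) - 2 * Kp) :=
  stmt6_general K Kp T hT d hmono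
end

section
/- Let d_1 ≤ ... ≤ d_K be reals, K' with 2K' < K, and suppose a multiset E of size K differs from {d_1,...,d_K} in at most T ≤ K' elements, with sorted values e_1 ≤ ... ≤ e_K. Then e_i ≤ d_{i+T} for all i with 1 ≤ i ≤ K-T, and e_i ≥ d_{i-T} for all i with T+1 ≤ i ≤ K. -/
/-!
Let `D` be the multiset of the `d_j`. Every predicate `p` satisfies
`countP p D ≤ countP p E + card (D - E) ≤ countP p E + T`. By monotonicity at least `i + T` of
the `d_j` are `≤ d_{i+T}`, so at least `i` elements of `E` are, which forces `e_i ≤ d_{i+T}`;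
symmetrically at least `K - i + 1` elements of `E` are `≥ d_{i-T}`, which forces `d_{i-T} ≤ e_i`.
-/

open Finset

namespace List

variable {α : Type*} [LinearOrder α] {l : List α} {k : ℕ}

theorem Pairwise.le_getElem_of_mem_take (hl : l.Pairwise (· ≤ ·)) (hk : k < l.length) {a : α}
    (ha : a ∈ l.take k) : a ≤ l[k] := by
  rw [← take_append_drop k l, pairwise_append, drop_eq_getElem_cons hk] at hl
  exact hl.2.2 a ha _ mem_cons_self

theorem Pairwise.getElem_le_of_mem_drop (hl : l.Pairwise (· ≤ ·)) (hk : k < l.length) {a : α}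
    (ha : a ∈ l.drop k) : l[k] ≤ a := by
  have hdrop := hl.drop (i := k)
  rw [drop_eq_getElem_cons hk, pairwise_cons] at hdrop
  rw [drop_eq_getElem_cons hk] at ha
  rcases mem_cons.mp ha with rfl | ha
  · exact le_rfl
  · exact hdrop.1 a ha

theorem Pairwise.countP_le_le_of_lt_getElem (hl : l.Pairwise (· ≤ ·)) (hk : k < l.length)
    {x : α} (hx : x < l[k]) : l.countP (· ≤ x) ≤ k := by
  have hdrop : (l.drop k).countP (· ≤ x) = 0 := countP_eq_zero.mpr fun a ha => by
    simpa using hx.trans_le (hl.getElem_le_of_mem_drop hk ha)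
  calc l.countP (· ≤ x) = (l.take k).countP (· ≤ x) + (l.drop k).countP (· ≤ x) := by
        rw [← countP_append, take_append_drop]
    _ ≤ (l.take k).length := by rw [hdrop, add_zero]; exact countP_le_length
    _ ≤ k := length_take_le k l

theorem Pairwise.countP_le_le_of_getElem_lt (hl : l.Pairwise (· ≤ ·)) (hk : k < l.length)
    {x : α} (hx : l[k] < x) : l.countP (x ≤ ·) ≤ l.length - (k + 1) := by
  have htake : (l.take k).countP (x ≤ ·) = 0 := countP_eq_zero.mpr fun a ha => by
    simpa using (hl.le_getElem_of_mem_take hk ha).trans_lt hx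
  calc l.countP (x ≤ ·) = (l.take k).countP (x ≤ ·) + (l.drop k).countP (x ≤ ·) := by
        rw [← countP_append, take_append_drop]
    _ = (l.drop (k + 1)).countP (x ≤ ·) := by
        rw [htake, zero_add, drop_eq_getElem_cons hk, countP_cons_of_neg (by simpa using hx)]
    _ ≤ l.length - (k + 1) := countP_le_length.trans (length_drop ..).le

end List

namespace Multiset

theorem countP_le_countP_add_card_tsub {α : Type*} (p : α → Prop) [DecidablePred p] [DecidableEq α]
    (s t : Multiset α) : s.countP p ≤ t.countP p + card (s - t) := by
  calc s.countP p ≤ (s - t + t).countP p := countP_le_of_le p le_tsub_add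
    _ = (s - t).countP p + t.countP p := countP_add ..
    _ ≤ card (s - t) + t.countP p := by gcongr; exact countP_le_card ..
    _ = t.countP p + card (s - t) := add_comm ..

theorem countP_sort {α : Type*} (s : Multiset α) (r : α → α → Prop) [DecidableRel r] [IsTrans α r]
    [Std.Antisymm r] [Std.Total r] (p : α → Prop) [DecidablePred p] :
    (s.sort r).countP (p ·) = s.countP p := by
  rw [← coe_countP, sort_eq]

end Multiset

section Sorted

variable {E : Multiset ℝ} {x : ℝ} {i : ℕ}

theorem sortedOf_eq_getElem (hi : 1 ≤ i) (hiE : i ≤ Multiset.card E) :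
    sortedOf E i = (E.sort (· ≤ ·))[i - 1]'(by rw [Multiset.length_sort]; omega) :=
  List.getD_eq_getElem ..

theorem sortedOf_le_of_le_countP (hi : 1 ≤ i) (h : i ≤ E.countP (· ≤ x)) : sortedOf E i ≤ x := by
  have hiE : i ≤ Multiset.card E := h.trans (Multiset.countP_le_card ..)
  rw [sortedOf_eq_getElem hi hiE]
  by_contra! hx
  have := (E.pairwise_sort (· ≤ ·)).countP_le_le_of_lt_getElem _ hx
  rw [Multiset.countP_sort E _ (· ≤ x)] at this
  omega

theorem le_sortedOf_of_card_lt_countP_add (hi : 1 ≤ i) (hiE : i ≤ Multiset.card E)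
    (h : Multiset.card E < E.countP (x ≤ ·) + i) : x ≤ sortedOf E i := by
  rw [sortedOf_eq_getElem hi hiE]
  by_contra! hx
  have := (E.pairwise_sort (· ≤ ·)).countP_le_le_of_getElem_lt _ hx
  rw [Multiset.countP_sort E _ (x ≤ ·), Multiset.length_sort] at this
  omega

end Sorted

section Monotone

variable {K : ℕ} {d : ℕ → ℝ}

theorem card_le_countP_msOf {p : ℝ → Prop} [DecidablePred p] {s : Finset ℕ}
    (hs : s ⊆ Finset.Icc 1 K) (hp : ∀ j ∈ s, p (d j)) : #s ≤ (msOf K d).countP p := by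
  rw [msOf, Multiset.countP_map, ← Finset.filter_val]
  exact Finset.card_le_card fun j hj => Finset.mem_filter.mpr ⟨hs hj, hp j hj⟩

variable (hmono : ∀ i j, 1 ≤ i → i ≤ j → j ≤ K → d i ≤ d j)
include hmono

theorem le_countP_le_msOf {m : ℕ} (hm : m ≤ K) : m ≤ (msOf K d).countP (· ≤ d m) := by
  simpa using card_le_countP_msOf (Finset.Icc_subset_Icc_right hm) fun j hj =>
    hmono j m (Finset.mem_Icc.mp hj).1 (Finset.mem_Icc.mp hj).2 hm

theorem lt_countP_ge_msOf {m : ℕ} (hm : 1 ≤ m) (hmK : m ≤ K) :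
    K < (msOf K d).countP (d m ≤ ·) + m := by
  have := card_le_countP_msOf (p := (d m ≤ ·)) (Finset.Icc_subset_Icc_left hm) fun j hj =>
    hmono m j hm (Finset.mem_Icc.mp hj).1 (Finset.mem_Icc.mp hj).2
  rw [Nat.card_Icc] at this
  omega

end Monotone

theorem stmt7_general (K T : ℕ) (d : ℕ → ℝ)
    (hmono : ∀ i j, 1 ≤ i → i ≤ j → j ≤ K → d i ≤ d j)
    (E : Multiset ℝ) (hcard : Multiset.card E = K)
    (hdiff : Multiset.card (msOf K d - E) ≤ T) :
    (∀ i, 1 ≤ i → i ≤ K - T → sortedOf E i ≤ d (i + T)) ∧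
    (∀ i, T + 1 ≤ i → i ≤ K → d (i - T) ≤ sortedOf E i) := by
  classical
  have hcount (p : ℝ → Prop) [DecidablePred p] : (msOf K d).countP p ≤ E.countP p + T :=
    (Multiset.countP_le_countP_add_card_tsub p _ E).trans (by omega)
  refine ⟨fun i hi hiK => sortedOf_le_of_le_countP hi ?_,
    fun i hi hiK => le_sortedOf_of_card_lt_countP_add (by omega) (by omega) ?_⟩
  · have := le_countP_le_msOf hmono (m := i + T) (by omega)
    have := hcount (· ≤ d (i + T))
    omega
  · have := lt_countP_ge_msOf hmono (m := i - T) (by omega) (by omega)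
    have := hcount (d (i - T) ≤ ·)
    omega

theorem stmt7 (K Kp T : ℕ) (hK : 2 * Kp < K) (hT : T ≤ Kp) (d : ℕ → ℝ)
    (hmono : ∀ i j, 1 ≤ i → i ≤ j → j ≤ K → d i ≤ d j)
    (E : Multiset ℝ) (hcard : Multiset.card E = K)
    (hdiff : Multiset.card (msOf K d - E) ≤ T) :
    (∀ i, 1 ≤ i → i ≤ K - T → sortedOf E i ≤ d (i + T)) ∧
    (∀ i, T + 1 ≤ i → i ≤ K → d (i - T) ≤ sortedOf E i) :=
  stmt7_general K T d hmono E hcard hdiff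
end

section
/- Under a Group Attack poisoning at most T ≤ K' samples in total across all classes, if for every class c ≠ ŷ and every split T^{ŷ} with 0 ≤ T^{ŷ} ≤ T it holds that U^{ŷ}(T^{ŷ}) < L^c(T - T^{ŷ}), then for every allocation (T^1,...,T^C) of nonnegative integers with ∑_c T^c ≤ T and for every corresponding poisoned support set, the robust-distance classifier still predicts ŷ. -/
/-
The certificate compares the worst case for `yhat` against the worst case for `c` when the
attacker spends `s` samples on `yhat` and everything else on `c`. An actual allocation spends
`t yhat` on `yhat` and at most `T - t yhat` on `c`; since the lower bound `Lb` only decreases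
as more samples are poisoned, `R yhat ≤ Ub (t yhat) < Lb (T - t yhat) ≤ Lb (t c) ≤ R c`.
-/

open Finset

theorem sum_Ico_add_le_of_monotoneOn {f : ℕ → ℝ} {a b n : ℕ}
    (hf : MonotoneOn f (Set.Ico a (b + n))) (hab : a ≤ b) :
    ∑ i ∈ Ico a (a + n), f i ≤ ∑ i ∈ Ico b (b + n), f i := by
  simp only [sum_Ico_eq_sum_range, add_tsub_cancel_left]
  refine sum_le_sum fun j hj => ?_
  rw [mem_range] at hj
  exact hf ⟨by omega, by omega⟩ ⟨by omega, by omega⟩ (by omega)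

theorem Lb_antitoneOn {K Kp : ℕ} (hK : 2 * Kp ≤ K) {d : ℕ → ℝ}
    (hd : MonotoneOn d (Set.Icc 1 K)) {t t' : ℕ} (htt' : t ≤ t') (ht' : t' ≤ Kp) :
    Lb K Kp d t' ≤ Lb K Kp d t := by
  have window : ∀ s ≤ Kp,
      Icc (Kp + 1 - s) (K - Kp - s) = Ico (Kp + 1 - s) (Kp + 1 - s + (K - 2 * Kp)) := by
    intro s hs
    rw [← Ico_add_one_right_eq_Icc]
    congr 1
    omega
  have hden : (0 : ℝ) ≤ K - 2 * Kp := by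
    rw [sub_nonneg]
    exact_mod_cast hK
  unfold Lb
  rw [window t' ht', window t (htt'.trans ht')]
  refine div_le_div_of_nonneg_right (sum_Ico_add_le_of_monotoneOn ?_ (by omega)) hden
  exact hd.mono fun i hi => ⟨by have := hi.1; omega, by have := hi.2; omega⟩

theorem stmt9 (C K Kp T : ℕ) (hK : 2 * Kp < K) (hT : T ≤ Kp)
    (d : Fin C → ℕ → ℝ)
    (hmono : ∀ c, ∀ i j, 1 ≤ i → i ≤ j → j ≤ K → d c i ≤ d c j)
    (yhat : Fin C) (t : Fin C → ℕ) (hsum : ∑ c, t c ≤ T)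
    (R : Fin C → ℝ)
    (hlo : ∀ c, Lb K Kp (d c) (t c) ≤ R c)
    (hhi : ∀ c, R c ≤ Ub K Kp (d c) (t c))
    (hcert : ∀ c, c ≠ yhat → ∀ s, s ≤ T → Ub K Kp (d yhat) s < Lb K Kp (d c) (T - s)) :
    ∀ c, c ≠ yhat → R yhat < R c := by
  intro c hc
  have hpair : t c + t yhat ≤ T := by
    rw [← sum_pair hc]
    exact (sum_le_sum_of_subset (subset_univ _)).trans hsum
  have hdc : MonotoneOn (d c) (Set.Icc 1 K) :=
    fun i hi j hj hij => hmono c i j hi.1 hij hj.2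
  calc R yhat ≤ Ub K Kp (d yhat) (t yhat) := hhi yhat
    _ < Lb K Kp (d c) (T - t yhat) := hcert c hc (t yhat) (by omega)
    _ ≤ Lb K Kp (d c) (t c) := Lb_antitoneOn hK.le hdc (by omega) (by omega)
    _ ≤ R c := hlo c
end

section
/- If T > K', the supremum of the K'-trimmed mean over all multisets differing from {d_1,...,d_K} in at most T elements is +∞ (i.e., it is unbounded above): for every M ∈ ℝ there exists such a multiset whose K'-trimmed mean exceeds M. -/
open Finset

/-
Raise the `Kp + 1` largest values to a common value `C ≥ d K`: this changes only `Kp + 1 ≤ T`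
elements and keeps the sample sorted, and since trimming removes only `Kp` values from the top,
one copy of `C` survives in the trimmed mean, which therefore grows without bound with `C`.
-/

theorem msOf_eq_coe_map_range' (K : ℕ) (d : ℕ → ℝ) :
    msOf K d = ↑((List.range' 1 K).map d) := by
  rw [msOf, Nat.Icc_eq_range', Nat.add_sub_cancel, Multiset.map_coe]

theorem sortedOf_coe_of_pairwise_s12 {L : List ℝ} (hL : L.Pairwise (· ≤ ·)) (i : ℕ) :
    sortedOf ↑L i = L.getD (i - 1) 0 := by
  rw [sortedOf, Multiset.coe_sort, List.mergeSort_eq_self _ hL]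

theorem sortedOf_msOf_of_monotoneOn {K : ℕ} {d : ℕ → ℝ} (hd : MonotoneOn d (Set.Icc 1 K))
    {i : ℕ} (hi : i ∈ Icc 1 K) : sortedOf (msOf K d) i = d i := by
  rw [mem_Icc] at hi
  have hsorted : ((List.range' 1 K).map d).Pairwise (· ≤ ·) := by
    refine List.pairwise_map.mpr (List.Pairwise.imp_of_mem ?_ List.pairwise_lt_range')
    intro a b ha hb hab
    rw [List.mem_range'_1] at ha hb
    exact hd ⟨ha.1, by omega⟩ ⟨hb.1, by omega⟩ hab.le
  rw [msOf_eq_coe_map_range', sortedOf_coe_of_pairwise_s12 hsorted,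
    List.getD_eq_getElem _ _ (by simp; omega)]
  simp only [List.getElem_map, List.getElem_range'_1]
  congr 1
  omega

theorem tm_sortedOf_msOf_of_monotoneOn {K Kp : ℕ} {d : ℕ → ℝ}
    (hd : MonotoneOn d (Set.Icc 1 K)) : tm K Kp (sortedOf (msOf K d)) = tm K Kp d := by
  rw [tm, tm, sum_congr rfl fun i hi =>
    sortedOf_msOf_of_monotoneOn hd (Icc_subset_Icc (by omega) (by omega) hi)]

theorem card_map_sub_map_le {α β : Type*} [DecidableEq β] (s : Finset α) (f g : α → β) :
    Multiset.card (s.val.map f - s.val.map g) ≤ #{i ∈ s | f i ≠ g i} := by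
  set A := s.val.filter (fun i => f i = g i)
  set B := s.val.filter (fun i => ¬f i = g i)
  have hsplit : s.val = A + B := (Multiset.filter_add_not _ _).symm
  have hA : A.map f = A.map g := Multiset.map_congr rfl fun i hi => (Multiset.mem_filter.mp hi).2
  calc Multiset.card (s.val.map f - s.val.map g)
      = Multiset.card (B.map f - B.map g) := by
        rw [hsplit, Multiset.map_add, Multiset.map_add, hA, add_tsub_add_eq_tsub_left]
    _ ≤ Multiset.card (B.map f) := Multiset.card_le_card tsub_le_self
    _ = #{i ∈ s | f i ≠ g i} := by rw [Multiset.card_map]; rfl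

def replaceFrom (d : ℕ → ℝ) (m : ℕ) (C : ℝ) : ℕ → ℝ :=
  fun i => if i < m then d i else C

theorem monotoneOn_replaceFrom {K m : ℕ} {d : ℕ → ℝ} {C : ℝ} (hd : MonotoneOn d (Set.Icc 1 K))
    (hC : d K ≤ C) : MonotoneOn (replaceFrom d m C) (Set.Icc 1 K) := by
  intro i hi j hj hij
  simp only [replaceFrom]
  split_ifs with him hjm hjm
  · exact hd hi hj hij
  · exact (hd hi ⟨hi.1.trans hi.2, le_rfl⟩ hi.2).trans hC
  · omega
  · exact le_rfl

theorem card_msOf_sub_msOf_replaceFrom_le (K m : ℕ) (d : ℕ → ℝ) (C : ℝ) :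
    Multiset.card (msOf K d - msOf K (replaceFrom d m C)) ≤ K + 1 - m := by
  calc Multiset.card (msOf K d - msOf K (replaceFrom d m C))
      ≤ #{i ∈ Icc 1 K | d i ≠ replaceFrom d m C i} := card_map_sub_map_le _ _ _
    _ ≤ #(Icc m K) := card_le_card fun i hi => by
        obtain ⟨hiK, hne⟩ := mem_filter.mp hi
        rw [mem_Icc] at hiK ⊢
        refine ⟨?_, hiK.2⟩
        by_contra! him
        exact hne (if_pos him).symm
    _ = K + 1 - m := Nat.card_Icc m K

theorem sum_Icc_replaceFrom {a m : ℕ} (ham : a ≤ m) (d : ℕ → ℝ) (C : ℝ) :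
    ∑ i ∈ Icc a m, replaceFrom d m C i = ∑ i ∈ Ico a m, d i + C := by
  rw [← Finset.Ico_add_one_right_eq_Icc, sum_Ico_succ_top ham]
  congr 1
  · exact sum_congr rfl fun i hi => if_pos (mem_Ico.mp hi).2
  · exact if_neg (lt_irrefl m)

theorem stmt12 (K Kp T : ℕ) (hK : 2 * Kp < K) (hT : Kp < T) (d : ℕ → ℝ)
    (hmono : ∀ i j, 1 ≤ i → i ≤ j → j ≤ K → d i ≤ d j) :
    ∀ M : ℝ, ∃ E : Multiset ℝ, Multiset.card E = K ∧
      Multiset.card (msOf K d - E) ≤ T ∧ M < tm K Kp (sortedOf E) := by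
  intro M
  have hd : MonotoneOn d (Set.Icc 1 K) := fun i hi j hj hij => hmono i j hi.1 hij hj.2
  have hD : (0 : ℝ) < K - 2 * Kp := by
    rw [sub_pos]; exact_mod_cast hK
  set S := ∑ i ∈ Ico (Kp + 1) (K - Kp), d i
  set C := max (d K) (M * (K - 2 * Kp) - S + 1)
  refine ⟨msOf K (replaceFrom d (K - Kp) C), by simp [msOf], ?_, ?_⟩
  · exact (card_msOf_sub_msOf_replaceFrom_le K (K - Kp) d C).trans (by omega)
  · rw [tm_sortedOf_msOf_of_monotoneOn (monotoneOn_replaceFrom hd (le_max_left _ _)), tm,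
      sum_Icc_replaceFrom (by omega), lt_div_iff₀ hD]
    linarith [le_max_right (d K) (M * (K - 2 * Kp) - S + 1)]
end

section
/- (Single-change exchange step) Let d_1 ≤ ... ≤ d_K be reals and K' with 2K' < K. Suppose indices i < j and a value v are given, and let E_1 be the sorted multiset obtained from {d_1,...,d_K} by replacing d_j with v, and E_2 the sorted multiset obtained by replacing d_i with v instead. Then the K'-trimmed mean of E_2 is greater than or equal to the K'-trimmed mean of E_1. -/
/-!
Writing the original multiset as `d_i ::ₘ d_j ::ₘ r`, the two new multisets are `v ::ₘ d_i ::ₘ r`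
and `v ::ₘ d_j ::ₘ r`. Sorting `a ::ₘ s` inserts `a` into the sorted list of `s`, and inserting a
larger value into a sorted list raises every entry, so each order statistic, and hence the
trimmed mean, can only grow.
-/

open Finset

section SortedInsert

variable {α : Type*} [LinearOrder α]

theorem List.Pairwise.orderedInsert_eq_cons {c : α} {t : List α}
    (h : (c :: t).Pairwise (· ≤ ·)) : t.orderedInsert (· ≤ ·) c = c :: t := by
  cases t with
  | nil => rfl
  | cons d t => simp [List.rel_of_pairwise_cons h List.mem_cons_self]

theorem List.Pairwise.getD_orderedInsert_le {l : List α} (hl : l.Pairwise (· ≤ ·))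
    {a b : α} (hab : a ≤ b) (x : α) (k : ℕ) :
    (l.orderedInsert (· ≤ ·) a).getD k x ≤ (l.orderedInsert (· ≤ ·) b).getD k x := by
  induction l generalizing a k with
  | nil => cases k <;> simp [hab]
  | cons c t ih =>
    have ht := hl.of_cons
    by_cases hbc : b ≤ c
    · simp only [List.orderedInsert_cons, if_pos hbc, if_pos (hab.trans hbc)]
      cases k <;> simp [hab]
    simp only [List.orderedInsert_cons, if_neg hbc]
    by_cases hac : a ≤ c
    · simp only [if_pos hac]
      cases k with
      | zero => simpa using hac
      | succ k =>
        -- `c :: t` is itself `t` with `c ≤ b` inserted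
        simpa [hl.orderedInsert_eq_cons] using ih ht (le_of_not_ge hbc) k
    · simp only [if_neg hac]
      cases k with
      | zero => simp
      | succ k => simpa using ih ht hab k

theorem Multiset.sort_cons_eq_orderedInsert (a : α) (s : Multiset α) :
    (a ::ₘ s).sort (· ≤ ·) = (s.sort (· ≤ ·)).orderedInsert (· ≤ ·) a := by
  refine List.Perm.eq_of_pairwise' (Multiset.pairwise_sort _ _)
    ((Multiset.pairwise_sort _ _).orderedInsert a _) ?_
  refine (Multiset.coe_eq_coe.mp ?_).trans (List.perm_orderedInsert _ a _).symm
  rw [← Multiset.cons_coe, Multiset.sort_eq, Multiset.sort_eq]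

end SortedInsert

theorem sortedOf_cons_le_cons {a b : ℝ} (hab : a ≤ b) (s : Multiset ℝ) (k : ℕ) :
    sortedOf (a ::ₘ s) k ≤ sortedOf (b ::ₘ s) k := by
  simp only [sortedOf, Multiset.sort_cons_eq_orderedInsert]
  exact (Multiset.pairwise_sort _ _).getD_orderedInsert_le hab _ _

theorem tm_le_tm_s14 {K Kp : ℕ} (hK : 2 * Kp < K) {e f : ℕ → ℝ} (hef : ∀ k, e k ≤ f k) :
    tm K Kp e ≤ tm K Kp f := by
  have hpos : (0 : ℝ) < (K : ℝ) - 2 * Kp := by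
    have : (2 * Kp : ℝ) < K := by exact_mod_cast hK
    linarith
  unfold tm
  gcongr with k
  exact hef k

theorem exists_msOf_eq_cons_cons {K : ℕ} (d : ℕ → ℝ) {i j : ℕ} (hi : i ∈ Icc 1 K)
    (hj : j ∈ Icc 1 K) (hij : i ≠ j) : ∃ r, msOf K d = d i ::ₘ d j ::ₘ r := by
  obtain ⟨t, ht⟩ := Multiset.exists_cons_of_mem (s := (Icc 1 K).val) hi
  have hjt : j ∈ t := by
    have : j ∈ i ::ₘ t := ht ▸ hj
    exact (Multiset.mem_cons.mp this).resolve_left hij.symm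
  obtain ⟨u, rfl⟩ := Multiset.exists_cons_of_mem hjt
  exact ⟨u.map d, by simp [msOf, ht]⟩

theorem stmt14 (K Kp : ℕ) (hK : 2 * Kp < K) (d : ℕ → ℝ)
    (hmono : ∀ i j, 1 ≤ i → i ≤ j → j ≤ K → d i ≤ d j)
    (i j : ℕ) (h1 : 1 ≤ i) (hij : i < j) (hjK : j ≤ K) (v : ℝ) :
    tm K Kp (sortedOf (v ::ₘ (msOf K d).erase (d j))) ≤
      tm K Kp (sortedOf (v ::ₘ (msOf K d).erase (d i))) := by
  obtain ⟨r, hr⟩ := exists_msOf_eq_cons_cons d (i := i) (j := j)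
    (mem_Icc.mpr ⟨h1, by omega⟩) (mem_Icc.mpr ⟨by omega, hjK⟩) hij.ne
  have hdij : d i ≤ d j := hmono i j h1 hij.le hjK
  rw [hr, Multiset.erase_cons_head, Multiset.cons_swap (d i), Multiset.erase_cons_head]
  refine tm_le_tm_s14 hK fun k => ?_
  rw [Multiset.cons_swap v, Multiset.cons_swap v]
  exact sortedOf_cons_le_cons hdij _ k
end
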